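/- arXiv:1803.07455 — 4 statements merged into one kernel-verified Lean document; each statement's English description precedes it below -/
import Mathlib

section
/- For all integers k ≥ 1 and n ≥ 1, the list chromatic number of the Cartesian product of the odd cycle C_{2k+1} and the path P_n equals 3; in particular C_{2k+1} □ P_n is chromatic-choosable. -/
open SimpleGraph Finset

attribute [local instance] Classical.propDecidable

namespace ATPaper

/-- An orientation of a simple graph: each edge receives exactly one direction,
and arcs only exist along edges. -/
structure GraphOrientation {V : Type*} (G : SimpleGraph V) where
  arc : V → V → Prop
  arc_adj : ∀ u v, arc u v → G.Adj u v
  adj_arc : ∀ u v, G.Adj u v → (arc u v ↔ ¬ arc v u)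

variable {V : Type*} [Fintype V]

/-- The set of arcs of an orientation. -/
noncomputable def GraphOrientation.arcs {G : SimpleGraph V} (D : GraphOrientation G) :
    Finset (V × V) :=
  Finset.univ.filter fun p => D.arc p.1 p.2

/-- In-degree of a vertex in a finite set of arcs. -/
noncomputable def indeg (F : Finset (V × V)) (v : V) : ℕ :=
  (F.filter fun p => p.2 = v).card

/-- Out-degree of a vertex in a finite set of arcs. -/
noncomputable def outdeg (F : Finset (V × V)) (v : V) : ℕ :=
  (F.filter fun p => p.1 = v).card

/-- The circulations contained in an orientation `D`: spanning subdigraphs (sets of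
arcs of `D`) in which every vertex has in-degree equal to out-degree. -/
noncomputable def circulations {G : SimpleGraph V} (D : GraphOrientation G) :
    Finset (Finset (V × V)) :=
  D.arcs.powerset.filter fun F => ∀ v, indeg F v = outdeg F v

/-- `G` has an Alon–Tarsi orientation witnessing the bound `k`: an orientation with
maximum in-degree at most `k - 1` in which the numbers of even and odd circulations
differ. -/
noncomputable def HasATOrientation (G : SimpleGraph V) (k : ℕ) : Prop :=
  ∃ D : GraphOrientation G,
    (∀ v, indeg D.arcs v + 1 ≤ k) ∧
    ((circulations D).filter fun F => Even F.card).card ≠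
      ((circulations D).filter fun F => Odd F.card).card

/-- The Alon–Tarsi number of `G`. -/
noncomputable def alonTarsiNumber (G : SimpleGraph V) : ℕ :=
  sInf {k | HasATOrientation G k}

/-- `G` admits a proper coloring from the list assignment `L`. -/
def Choosable {W : Type*} (G : SimpleGraph W) (L : W → Finset ℕ) : Prop :=
  ∃ f : W → ℕ, (∀ v, f v ∈ L v) ∧ ∀ u v, G.Adj u v → f u ≠ f v

/-- `G` is `k`-choosable: colorable from every list assignment with lists of size at
least `k`. -/
def IsKChoosable {W : Type*} (G : SimpleGraph W) (k : ℕ) : Prop :=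
  ∀ L : W → Finset ℕ, (∀ v, k ≤ (L v).card) → Choosable G L

/-- The list chromatic number of `G`. -/
noncomputable def listChromaticNumber {W : Type*} (G : SimpleGraph W) : ℕ :=
  sInf {k | IsKChoosable G k}

/-- The `r`-th power of a graph: distinct vertices are adjacent iff their distance
is at most `r`. -/
def graphPower {W : Type*} (G : SimpleGraph W) (r : ℕ) : SimpleGraph W where
  Adj u v := u ≠ v ∧ G.Reachable u v ∧ G.dist u v ≤ r
  symm := by
    constructor
    rintro u v ⟨h1, h2, h3⟩
    exact ⟨h1.symm, h2.symm, by rwa [SimpleGraph.dist_comm]⟩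
  loopless := by constructor; rintro v ⟨h1, -, -⟩; exact h1 rfl

/-- The join of two vertex-disjoint graphs. -/
def joinGraph {A B : Type*} (G : SimpleGraph A) (H : SimpleGraph B) :
    SimpleGraph (A ⊕ B) where
  Adj x y :=
    match x, y with
    | Sum.inl a, Sum.inl b => G.Adj a b
    | Sum.inr a, Sum.inr b => H.Adj a b
    | Sum.inl _, Sum.inr _ => True
    | Sum.inr _, Sum.inl _ => True
  symm := by
    constructor
    rintro (a | a) (b | b) h
    · exact G.adj_symm h
    · trivial
    · trivial
    · exact H.adj_symm h
  loopless := by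
    constructor
    rintro (a | a) h
    · exact G.irrefl h
    · exact H.irrefl h

/-!
Colour `C_m □ P_n` row by row, each row a copy of `C_m` whose lists have lost the colour of
the vertex below. If the lists of a cycle have at least two colours each and are not all the
same pair, the cycle has two different colourings from them. A colouring of a row that leaves
the next row with lists all equal to one pair is determined by that pair, and two such
colourings for different pairs would be constant, so one of the two colourings keeps the
induction going. The lower bound is the chromatic number `3` of the odd cycle inside.
-/

section ListColoring

variable {W : Type*} {G : SimpleGraph W}

def IsListColoring (G : SimpleGraph W) (L : W → Finset ℕ) (f : W → ℕ) : Prop :=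
  (∀ v, f v ∈ L v) ∧ ∀ u v, G.Adj u v → f u ≠ f v

theorem IsListColoring.mono {L L' : W → Finset ℕ} {f : W → ℕ} (hf : IsListColoring G L f)
    (h : ∀ v, L v ⊆ L' v) : IsListColoring G L' f :=
  ⟨fun v => h v (hf.1 v), hf.2⟩

def IsUniformPair (L : W → Finset ℕ) : Prop :=
  ∃ S : Finset ℕ, S.card = 2 ∧ ∀ v, L v = S

def HasTwoListColorings (G : SimpleGraph W) : Prop :=
  ∀ L : W → Finset ℕ, (∀ v, 2 ≤ (L v).card) → ¬ IsUniformPair L →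
    ∃ f g, IsListColoring G L f ∧ IsListColoring G L g ∧ f ≠ g

theorem IsKChoosable.colorable {k : ℕ} (h : IsKChoosable G k) : G.Colorable k := by
  obtain ⟨f, hf, hadj⟩ := h (fun _ => range k) (by simp)
  exact ⟨Coloring.mk (fun v => ⟨f v, mem_range.1 (hf v)⟩)
    fun huv heq => hadj _ _ huv (Fin.mk.inj heq)⟩

theorem IsKChoosable.listChromaticNumber_eq {k : ℕ} (h : IsKChoosable G k)
    (hk : (k : ℕ∞) ≤ G.chromaticNumber) : listChromaticNumber G = k :=
  le_antisymm (Nat.sInf_le h) (le_csInf ⟨k, h⟩ fun _ hj => by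
    exact_mod_cast hk.trans hj.colorable.chromaticNumber_le)

theorem IsKChoosable.chromaticNumber_eq {k : ℕ} (h : IsKChoosable G k)
    (hk : (k : ℕ∞) ≤ G.chromaticNumber) : G.chromaticNumber = k :=
  le_antisymm h.colorable.chromaticNumber_le hk

theorem eq_of_erase_eq_of_card_lt {α : Type*} [DecidableEq α] {S T : Finset α} {x y : α}
    (hx : T.erase x = S) (hy : T.erase y = S) (hST : S.card < T.card) : x = y := by
  have hxT : x ∈ T := by
    by_contra h
    rw [erase_eq_of_notMem h] at hx
    exact hST.ne (by rw [hx])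
  by_contra hne
  have hx' : x ∈ T.erase x := by rw [hx, ← hy]; exact mem_erase.2 ⟨hne, hxT⟩
  exact notMem_erase x T hx'

variable {u v : W}

theorem HasTwoListColorings.exists_not_isUniformPair_erase (hG : HasTwoListColorings G)
    (huv : G.Adj u v) {L L' : W → Finset ℕ} (hL : ∀ x, 2 ≤ (L x).card)
    (hLu : ¬ IsUniformPair L) (hL' : ∀ x, 3 ≤ (L' x).card) :
    ∃ f, IsListColoring G L f ∧ ¬ IsUniformPair fun x => (L' x).erase (f x) := by
  obtain ⟨f, g, hf, hg, hfg⟩ := hG L hL hLu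
  by_contra! hbad
  obtain ⟨S, hS, hfS⟩ := hbad f hf
  obtain ⟨T, hT, hgT⟩ := hbad g hg
  rcases eq_or_ne S T with rfl | hST
  · exact hfg (funext fun x => eq_of_erase_eq_of_card_lt (hfS x) (hgT x) (by have := hL' x; omega))
  -- a colour of `T \ S` lies in every `L' x` but not in `(L' x).erase (f x)`, so `f` is constant
  obtain ⟨c, hcT, hcS⟩ := not_subset.1 fun h => hST (eq_of_subset_of_card_le h (by omega)).symm
  have hconst : ∀ x, f x = c := fun x => by
    by_contra hne
    have hc : c ∈ L' x := mem_of_mem_erase (hgT x ▸ hcT)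
    exact hcS (hfS x ▸ mem_erase.2 ⟨Ne.symm hne, hc⟩)
  exact hf.2 u v huv ((hconst u).trans (hconst v).symm)

theorem HasTwoListColorings.exists_rowColorings (hG : HasTwoListColorings G) (huv : G.Adj u v)
    (L : ℕ → W → Finset ℕ) (hL : ∀ j x, 3 ≤ (L j x).card) (N : ℕ) :
    ∃ c : ℕ → W → ℕ, (∀ j ≤ N, IsListColoring G (L j) (c j)) ∧
      (∀ j < N, ∀ x, c (j + 1) x ≠ c j x) ∧
      ¬ IsUniformPair fun x => (L (N + 1) x).erase (c N x) := by
  induction N with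
  | zero =>
    have hL0 : ¬ IsUniformPair (L 0) := fun ⟨S, hS, h⟩ => by
      have := hL 0 u
      rw [h u] at this
      omega
    obtain ⟨f, hf, hgood⟩ :=
      hG.exists_not_isUniformPair_erase huv (fun x => by have := hL 0 x; omega) hL0 (hL 1)
    refine ⟨fun _ => f, fun j hj => ?_, fun j hj => absurd hj j.not_lt_zero, hgood⟩
    obtain rfl := Nat.le_zero.1 hj
    exact hf
  | succ N ih =>
    obtain ⟨c, hc, hstep, hgood⟩ := ih
    have hcard : ∀ x, 2 ≤ ((L (N + 1) x).erase (c N x)).card := fun x => by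
      have := hL (N + 1) x
      have := pred_card_le_card_erase (s := L (N + 1) x) (a := c N x)
      omega
    obtain ⟨f, hf, hgood'⟩ := hG.exists_not_isUniformPair_erase huv hcard hgood (hL (N + 2))
    refine ⟨Function.update c (N + 1) f, fun j hj => ?_, fun j hj x => ?_, by simpa using hgood'⟩
    · rcases hj.lt_or_eq with hj | rfl
      · rw [Function.update_of_ne (by omega)]
        exact hc j (by omega)
      · rw [Function.update_self]
        exact hf.mono fun x => erase_subset _ _
    · rcases (Nat.lt_succ_iff.1 hj).lt_or_eq with hj | rfl
      · rw [Function.update_of_ne (by omega), Function.update_of_ne (by omega)]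
        exact hstep j hj x
      · rw [Function.update_self, Function.update_of_ne (by omega)]
        exact (mem_erase.1 (hf.1 x)).1

theorem HasTwoListColorings.isKChoosable_boxProd_pathGraph (hG : HasTwoListColorings G)
    (huv : G.Adj u v) (n : ℕ) : IsKChoosable (G □ pathGraph n) 3 := by
  intro L hL
  let L' : ℕ → W → Finset ℕ := fun j x => if h : j < n then L (x, ⟨j, h⟩) else range 3
  have hL' : ∀ j x, 3 ≤ (L' j x).card := fun j x => by
    unfold L'
    split_ifs
    exacts [hL _, by simp]
  obtain ⟨c, hc, hstep, -⟩ := hG.exists_rowColorings huv L' hL' n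
  refine ⟨fun p => c p.2 p.1, fun ⟨x, j⟩ => ?_, ?_⟩
  · simpa [L', j.isLt] using (hc j j.isLt.le).1 x
  · rintro ⟨x, i⟩ ⟨y, j⟩ h
    rcases boxProd_adj.1 h with ⟨hxy, hij⟩ | ⟨hij, hxy⟩
    · obtain rfl : i = j := hij
      exact (hc i i.isLt.le).2 x y hxy
    · obtain rfl : x = y := hxy
      rcases pathGraph_adj.1 hij with h | h
      · change c i x ≠ c j x
        rw [← h]
        exact (hstep i (by omega) x).symm
      · change c i x ≠ c j x
        rw [← h]
        exact hstep j (by omega) x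

end ListColoring

section Cycle

variable {m : ℕ}

-- Colourings of the cycle `0, 1, …, m - 1` as sequences, so that they can be built along it.
def IsCycleSeqColoring (m : ℕ) (l : ℕ → Finset ℕ) (d : ℕ → ℕ) : Prop :=
  (∀ t < m, d t ∈ l t) ∧ (∀ t, t + 1 < m → d t ≠ d (t + 1)) ∧ d (m - 1) ≠ d 0

def greedyPath (l : ℕ → Finset ℕ) (pick : Finset ℕ → ℕ) (a : ℕ) : ℕ → ℕ
  | 0 => a
  | t + 1 => pick ((l (t + 1)).erase (greedyPath l pick a t))

-- When every `d r` also lies in `l (r + 1)`, moving the block `1, …, T` one step along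
-- keeps all colours in their lists, and only the junction at `T` and the ends need checking.
def shiftDown (d : ℕ → ℕ) (w T r : ℕ) : ℕ :=
  if r = 0 then w else if r ≤ T then d (r - 1) else d r

theorem card_le_one_of_sInf_eq_sSup {S : Finset ℕ} (h : sInf (S : Set ℕ) = sSup (S : Set ℕ)) :
    S.card ≤ 1 :=
  card_le_one.2 fun x hx y hy => by
    have := Nat.sInf_le (s := (S : Set ℕ)) hx
    have := Nat.sInf_le (s := (S : Set ℕ)) hy
    have := le_csSup S.bddAbove (mem_coe.2 hx)
    have := le_csSup S.bddAbove (mem_coe.2 hy)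
    omega

variable {l : ℕ → Finset ℕ} {a : ℕ}

theorem greedyPath_succ_mem_erase {pick : Finset ℕ → ℕ}
    (hpick : ∀ S : Finset ℕ, S.Nonempty → pick S ∈ S) (hl : ∀ t, 2 ≤ (l t).card) (t : ℕ) :
    greedyPath l pick a (t + 1) ∈ (l (t + 1)).erase (greedyPath l pick a t) := by
  apply hpick
  rw [← card_pos]
  have := hl (t + 1)
  have := pred_card_le_card_erase (s := l (t + 1)) (a := greedyPath l pick a t)
  omega

theorem isCycleSeqColoring_greedyPath {pick : Finset ℕ → ℕ}
    (hpick : ∀ S : Finset ℕ, S.Nonempty → pick S ∈ S) (hl : ∀ t, 2 ≤ (l t).card)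
    (ha : a ∈ l 0) (ham : a ∉ l (m - 1)) : IsCycleSeqColoring m l (greedyPath l pick a) := by
  have hmem : ∀ t, greedyPath l pick a t ∈ l t
    | 0 => ha
    | t + 1 => (mem_erase.1 (greedyPath_succ_mem_erase hpick hl t)).2
  refine ⟨fun t _ => hmem t,
    fun t _ => (mem_erase.1 (greedyPath_succ_mem_erase hpick hl t)).1.symm, fun h => ham ?_⟩
  have := hmem (m - 1)
  rwa [h] at this

theorem sInf_mem_of_nonempty (S : Finset ℕ) (hS : S.Nonempty) : sInf (S : Set ℕ) ∈ S :=
  Nat.sInf_mem (coe_nonempty.2 hS)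

theorem sSup_mem_of_nonempty (S : Finset ℕ) (hS : S.Nonempty) : sSup (S : Set ℕ) ∈ S :=
  Nat.sSup_mem (coe_nonempty.2 hS) S.bddAbove

theorem mem_of_greedyPath_sInf_eq_sSup (hl : ∀ t, 2 ≤ (l t).card)
    (h : ∀ t < m, greedyPath l (fun S => sInf ↑S) a t = greedyPath l (fun S => sSup ↑S) a t)
    (t : ℕ) (ht : t + 1 < m) : greedyPath l (fun S => sInf ↑S) a t ∈ l (t + 1) := by
  have hS := h (t + 1) ht
  simp only [greedyPath] at hS
  rw [← h t (by omega)] at hS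
  by_contra hnot
  have := card_le_one_of_sInf_eq_sSup hS
  rw [erase_eq_of_notMem hnot] at this
  have := hl (t + 1)
  omega

variable {d : ℕ → ℕ}

theorem isCycleSeqColoring_shiftDown (hd : IsCycleSeqColoring m l d)
    (hforced : ∀ r, r + 1 < m → d r ∈ l (r + 1)) {w T : ℕ} (hw : w ∈ l 0) (hwd : w ≠ d 0)
    (hT : 1 ≤ T) (hTm : T < m) (hjunction : T + 1 < m → d (T - 1) ≠ d (T + 1))
    (hclose : shiftDown d w T (m - 1) ≠ w) : IsCycleSeqColoring m l (shiftDown d w T) := by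
  obtain ⟨hmem, hstep, -⟩ := hd
  refine ⟨fun r hr => ?_, fun r hr => ?_, by simpa [shiftDown] using hclose⟩
  · unfold shiftDown
    split_ifs with h0 hrT
    · exact h0 ▸ hw
    · simpa [Nat.sub_add_cancel (Nat.one_le_iff_ne_zero.2 h0)] using hforced (r - 1) (by omega)
    · exact hmem r hr
  · rcases Nat.eq_zero_or_pos r with rfl | hr0
    · simpa [shiftDown, hT] using hwd
    rw [shiftDown, shiftDown, if_neg hr0.ne', if_neg r.succ_ne_zero]
    rcases lt_trichotomy r T with hrT | rfl | hrT
    · have := hstep (r - 1) (by omega)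
      rw [Nat.sub_add_cancel hr0] at this
      rwa [if_pos hrT.le, if_pos (show r + 1 ≤ T by omega), Nat.add_sub_cancel]
    · rw [if_pos le_rfl, if_neg (by omega)]
      exact hjunction hr
    · rw [if_neg (by omega), if_neg (by omega)]
      exact hstep r hr

theorem exists_isCycleSeqColoring_ne_of_forced (hl0 : 2 ≤ (l 0).card)
    (hd : IsCycleSeqColoring m l d) (hforced : ∀ r, r + 1 < m → d r ∈ l (r + 1))
    (hd0 : d 0 ∉ l (m - 1)) : ∃ e, IsCycleSeqColoring m l e ∧ e 0 ≠ d 0 := by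
  have ⟨hmem, hstep, hclose⟩ := hd
  have hm : 2 ≤ m := by
    by_contra hm
    rcases Nat.eq_zero_or_pos m with rfl | hm0
    · exact hclose rfl
    · exact hd0 (by simpa [show m - 1 = 0 by omega] using hmem 0 hm0)
  -- otherwise `d` takes the value `d 0` at every even position, among them `m - 2` or `m - 1`,
  -- and both `d (m - 2)` and `d (m - 1)` lie in `l (m - 1)`
  obtain ⟨t, ht1, htm, ht⟩ : ∃ t, 1 ≤ t ∧ t + 1 < m ∧ d (t - 1) ≠ d (t + 1) := by
    by_contra! halt
    have heven : ∀ r, 2 * r < m → d (2 * r) = d 0 := fun r => by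
      induction r with
      | zero => simp
      | succ r ih =>
        intro hr
        have := halt (2 * r + 1) (by omega) (by omega)
        rw [show 2 * r + 1 - 1 = 2 * r by omega] at this
        rw [show 2 * (r + 1) = 2 * r + 1 + 1 by ring, ← this, ih (by omega)]
    rcases Nat.even_or_odd m with ⟨r, hr⟩ | ⟨r, hr⟩
    · have := hforced (2 * (r - 1)) (by omega)
      rw [heven _ (by omega), show 2 * (r - 1) + 1 = m - 1 by omega] at this
      exact hd0 this
    · have := hmem (2 * r) (by omega)
      rw [heven _ (by omega), show 2 * r = m - 1 by omega] at this
      exact hd0 this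
  obtain ⟨w, hw⟩ : ((l 0).erase (d 0)).Nonempty := by
    rw [← card_pos]
    have := pred_card_le_card_erase (s := l 0) (a := d 0)
    omega
  rw [mem_erase] at hw
  by_cases hwm : w = d (m - 1)
  · refine ⟨shiftDown d w (m - 1), isCycleSeqColoring_shiftDown hd hforced hw.2 hw.1 (by omega)
      (by omega) (fun h => absurd h (by omega)) ?_, by simpa [shiftDown] using hw.1⟩
    have := hstep (m - 2) (by omega)
    simp only [shiftDown, show m - 1 ≠ 0 by omega, if_false, le_refl, if_true, hwm]
    rwa [show m - 1 - 1 = m - 2 by omega, ← show m - 2 + 1 = m - 1 by omega]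
  · refine ⟨shiftDown d w t, isCycleSeqColoring_shiftDown hd hforced hw.2 hw.1 ht1 (by omega)
      (fun _ => ht) ?_, by simpa [shiftDown] using hw.1⟩
    simpa [shiftDown, show m - 1 ≠ 0 by omega, show ¬ m - 1 ≤ t by omega] using Ne.symm hwm

-- If the greedy colourings picking the least and the largest colour agree, every step was forced.
theorem exists_two_isCycleSeqColoring (hl : ∀ t, 2 ≤ (l t).card) (ha : a ∈ l 0)
    (ham : a ∉ l (m - 1)) :
    ∃ d₁ d₂, IsCycleSeqColoring m l d₁ ∧ IsCycleSeqColoring m l d₂ ∧ ∃ t < m, d₁ t ≠ d₂ t := by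
  have hmin := isCycleSeqColoring_greedyPath (m := m) sInf_mem_of_nonempty hl ha ham
  have hmax := isCycleSeqColoring_greedyPath (m := m) sSup_mem_of_nonempty hl ha ham
  by_cases h : ∃ t < m, greedyPath l (fun S => sInf ↑S) a t ≠ greedyPath l (fun S => sSup ↑S) a t
  · exact ⟨_, _, hmin, hmax, h⟩
  push Not at h
  obtain ⟨e, he, he0⟩ :=
    exists_isCycleSeqColoring_ne_of_forced (hl 0) hmin (mem_of_greedyPath_sInf_eq_sSup hl h) ham
  have hm : 0 < m := Nat.pos_of_ne_zero (by rintro rfl; exact ham ha)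
  exact ⟨e, _, he, hmin, 0, hm, he0⟩

end Cycle

section CycleGraph

open Fin.CommRing

variable {m : ℕ} [NeZero m]

theorem eq_of_forall_add_one_le {α : Type*} [PartialOrder α] {l : Fin m → α}
    (h : ∀ i, l (i + 1) ≤ l i) (i j : Fin m) : l i = l j := by
  have key : ∀ j (t : ℕ), l (j + t) ≤ l j := fun j t => by
    induction t with
    | zero => simp
    | succ t ih => rw [Nat.cast_succ, ← add_assoc]; exact (h _).trans ih
  have hle : ∀ i j, l i ≤ l j := fun i j => by simpa using key j (i - j).val
  exact (hle i j).antisymm (hle j i)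

theorem eq_add_one_or_of_cycleGraph_adj {u v : Fin m} (h : (cycleGraph m).Adj u v) :
    u = v + 1 ∨ v = u + 1 := by
  have key : ∀ x y : Fin m, (x - y).val = 1 → x = y + 1 := fun x y hxy => by
    have h1 : x - y = 1 :=
      Fin.ext (by rw [hxy, Fin.val_one', Nat.mod_eq_of_lt (hxy ▸ (x - y).isLt)])
    rw [← h1]
    ring
  rcases cycleGraph_adj'.1 h with h | h
  exacts [.inl (key u v h), .inr (key v u h)]

theorem isListColoring_cycleGraph_of_isCycleSeqColoring {l : Fin m → Finset ℕ} (s : Fin m)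
    {d : ℕ → ℕ} (hd : IsCycleSeqColoring m (fun t => l (s + t)) d) :
    IsListColoring (cycleGraph m) l fun i => d (i - s).val := by
  obtain ⟨hmem, hstep, hclose⟩ := hd
  have hsucc : ∀ i : Fin m, d (i + 1 - s).val ≠ d (i - s).val := fun i => by
    have hval : (i + 1 - s).val = ((i - s).val + 1) % m := by
      rw [add_sub_right_comm, Fin.val_add, Fin.val_one', Nat.add_mod_mod]
    rw [hval]
    rcases Nat.lt_or_ge ((i - s).val + 1) m with h | h
    · rw [Nat.mod_eq_of_lt h]
      exact (hstep _ h).symm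
    · have : (i - s).val = m - 1 := by have := (i - s).isLt; omega
      rw [this, Nat.sub_add_cancel NeZero.one_le, Nat.mod_self]
      exact hclose.symm
  refine ⟨fun i => by simpa using hmem (i - s).val (i - s).isLt, fun u v huv => ?_⟩
  rcases eq_add_one_or_of_cycleGraph_adj huv with rfl | rfl
  exacts [hsucc v, (hsucc u).symm]

-- A colour of `l' (i + 1)` missing from `l' i` lets a greedy colouring started at `i + 1`
-- close up at `i`.
theorem exists_subset_mem_add_one_notMem (hm : 2 ≤ m) {l : Fin m → Finset ℕ}
    (hl : ∀ i, 2 ≤ (l i).card) (hlu : ¬ IsUniformPair l) :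
    ∃ l' : Fin m → Finset ℕ, (∀ i, l' i ⊆ l i) ∧ (∀ i, 2 ≤ (l' i).card) ∧
      ∃ i a, a ∈ l' (i + 1) ∧ a ∉ l' i := by
  by_cases h : ∀ i, l (i + 1) ⊆ l i
  · have hall := eq_of_forall_add_one_le h
    have h3 : 3 ≤ (l 0).card := by
      by_contra h3
      exact hlu ⟨l 0, by have := hl 0; omega, fun i => hall i 0⟩
    obtain ⟨a, ha⟩ := card_pos.1 (by omega : 0 < (l 0).card)
    have hne : (0 : Fin m) ≠ -1 := by
      intro h0
      have := congrArg Fin.val (neg_eq_zero.1 h0.symm)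
      rw [Fin.val_one', Nat.mod_eq_of_lt (by omega), Fin.val_zero] at this
      omega
    refine ⟨Function.update l (-1) ((l (-1)).erase a), fun i => ?_, fun i => ?_, -1, a, ?_, ?_⟩
    · rcases eq_or_ne i (-1) with rfl | hi
      · simp [erase_subset]
      · simp [hi]
    · rcases eq_or_ne i (-1) with rfl | hi
      · have := pred_card_le_card_erase (s := l (-1)) (a := a)
        rw [hall (-1) 0] at this ⊢
        simp only [Function.update_self]
        omega
      · simpa [hi] using hl i
    · simpa [hne] using ha
    · simp
  · push Not at h
    obtain ⟨i, hi⟩ := h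
    obtain ⟨a, ha, ha'⟩ := not_subset.1 hi
    exact ⟨l, fun _ => Subset.rfl, hl, i, a, ha, ha'⟩

end CycleGraph

open Fin.CommRing in
theorem hasTwoListColorings_cycleGraph {m : ℕ} (hm : 2 ≤ m) :
    HasTwoListColorings (cycleGraph m) := by
  have : NeZero m := ⟨by omega⟩
  intro l hl hlu
  obtain ⟨l', hl'l, hl', i, a, ha, ha'⟩ := exists_subset_mem_add_one_notMem hm hl hlu
  have hpred : i + 1 + ((m - 1 : ℕ) : Fin m) = i := by
    rw [Nat.cast_sub NeZero.one_le]
    simp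
  obtain ⟨d₁, d₂, hd₁, hd₂, t, ht, hne⟩ :=
    exists_two_isCycleSeqColoring (m := m) (l := fun t => l' (i + 1 + t)) (fun t => hl' _)
      (by simpa using ha) (by simpa [hpred] using ha')
  refine ⟨_, _, (isListColoring_cycleGraph_of_isCycleSeqColoring _ hd₁).mono hl'l,
    (isListColoring_cycleGraph_of_isCycleSeqColoring _ hd₂).mono hl'l, fun h => hne ?_⟩
  simpa [Fin.val_natCast, Nat.mod_eq_of_lt ht] using congrFun h (i + 1 + t)

/-- For all integers `k ≥ 1` and `n ≥ 1`, the list chromatic number of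
`C_{2k+1} □ P_n` equals `3`; in particular `C_{2k+1} □ P_n` is chromatic-choosable. -/
theorem listChromaticNumber_oddCycle_boxProd_path (k n : ℕ) (hk : 1 ≤ k) (hn : 1 ≤ n) :
    listChromaticNumber (cycleGraph (2 * k + 1) □ pathGraph n) = 3 ∧
    (cycleGraph (2 * k + 1) □ pathGraph n).chromaticNumber =
      (listChromaticNumber (cycleGraph (2 * k + 1) □ pathGraph n) : ℕ∞) := by
  have hm : 2 ≤ 2 * k + 1 := by omega
  have hadj : (cycleGraph (2 * k + 1)).Adj 0 1 := by
    simp [cycleGraph_adj', Nat.mod_eq_of_lt (show 1 < 2 * k + 1 by omega)]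
  have hchoose := (hasTwoListColorings_cycleGraph hm).isKChoosable_boxProd_pathGraph hadj n
  have hχ : ((3 : ℕ) : ℕ∞) ≤ (cycleGraph (2 * k + 1) □ pathGraph n).chromaticNumber := by
    rw [Nat.cast_ofNat, ← chromaticNumber_cycleGraph_of_odd _ hm (odd_two_mul_add_one k)]
    exact chromaticNumber_mono_of_hom (boxProdLeft _ _ (⟨0, hn⟩ : Fin n)).toHom
  rw [hchoose.listChromaticNumber_eq hχ]
  exact ⟨rfl, hchoose.chromaticNumber_eq hχ⟩

end ATPaper
end

section
/- Let k ≥ 1 and n ≥ 2, let v_1, …, v_{2k+1} be the vertices of C_{2k+1} in cyclic order and w_1, …, w_n the vertices of P_n in path order, and let G = C_{2k+1} □ P_n. If L is a list assignment for G such that |L((v_1, w_1))| ≥ 3, |L((v_i, w_1))| ≥ 2 for every i with 2 ≤ i ≤ 2k+1, and |L((v_i, w_j))| ≥ 3 for every i and every j ≥ 2, then G is L-colorable. -/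
open SimpleGraph Finset

attribute [local instance] Classical.propDecidable

namespace ATPaper

variable {V : Type*} [Fintype V]

/-! Colour the copies of the cycle one after another, keeping two different colourings of the
current copy available. If `f ≠ f'` are proper colourings of one copy and every vertex of the next
copy has at least three colours, removing `f i` (resp. `f' i`) from the list of vertex `i` leaves
lists of size at least two; on an odd cycle such lists fail to have two colourings only when they
all equal one 2-set, and this cannot happen for both `f` and `f'`.

Two colourings from 2-lists are found greedily along the path that runs once around the cycle. A
list of size three (as at `(v₁, w₁)`) allows two starting colours. Otherwise take an edge `{-1, 0}`
whose lists differ and start at `0`, resp. `-1`, with a colour absent from the other end: if both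
greedy colourings are unique and equal, every list is forced by both neighbours, so the colouring
is 2-periodic along the odd path from `0` to `-1`, which is impossible. -/

open scoped Fin.NatCast Fin.CommRing

lemma two_le_card_erase {α : Type*} [DecidableEq α] {s : Finset α} (hs : 3 ≤ #s) (a : α) :
    2 ≤ #(s.erase a) := by
  have := pred_card_le_card_erase (s := s) (a := a)
  omega

section Path

def IsPathColoring (K : ℕ → Finset ℕ) (t : ℕ) (p : ℕ → ℕ) : Prop :=
  (∀ j ≤ t, p j ∈ K j) ∧ ∀ j < t, p j ≠ p (j + 1)

variable {K : ℕ → Finset ℕ}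

lemma IsPathColoring.update {t : ℕ} {p : ℕ → ℕ} (hp : IsPathColoring K t p) {c : ℕ}
    (hc : c ∈ K (t + 1)) (hne : c ≠ p t) :
    IsPathColoring K (t + 1) (Function.update p (t + 1) c) := by
  refine ⟨fun j hj => ?_, fun j hj => ?_⟩
  · rcases eq_or_ne j (t + 1) with rfl | hjt
    · simpa using hc
    · rw [Function.update_of_ne hjt]
      exact hp.1 j (by omega)
  · rw [Function.update_of_ne (by omega : j ≠ t + 1)]
    rcases eq_or_ne j t with rfl | hjt
    · simpa using hne.symm
    · rw [Function.update_of_ne (by omega : j + 1 ≠ t + 1)]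
      exact hp.2 j (by omega)

lemma exists_isPathColoring_ne_or_forced (hK₀ : (K 0).Nonempty) :
    ∀ t, (∀ j < t, 2 ≤ #(K (j + 1))) →
      (∃ p₁ p₂, IsPathColoring K t p₁ ∧ IsPathColoring K t p₂ ∧ ∃ j ≤ t, p₁ j ≠ p₂ j) ∨
      ∃ p, IsPathColoring K t p ∧ ∀ j < t, K (j + 1) = {p j, p (j + 1)}
  | 0, _ => by
    obtain ⟨x, hx⟩ := hK₀
    refine Or.inr ⟨fun _ => x, ⟨fun j hj => ?_, by simp⟩, by simp⟩
    obtain rfl : j = 0 := by omega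
    exact hx
  | t + 1, hK => by
    rcases exists_isPathColoring_ne_or_forced hK₀ t fun j hj => hK j (by omega) with
      ⟨p₁, p₂, hp₁, hp₂, j, hj, hne⟩ | ⟨p, hp, hforced⟩
    · obtain ⟨c₁, hc₁, hne₁⟩ := exists_mem_ne (hK t (by omega)) (p₁ t)
      obtain ⟨c₂, hc₂, hne₂⟩ := exists_mem_ne (hK t (by omega)) (p₂ t)
      refine Or.inl ⟨_, _, hp₁.update hc₁ hne₁, hp₂.update hc₂ hne₂, j, by omega, ?_⟩
      simpa [Function.update_of_ne (by omega : j ≠ t + 1)] using hne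
    by_cases hfree : 2 ≤ #((K (t + 1)).erase (p t))
    · obtain ⟨c₁, hc₁, c₂, hc₂, hc⟩ := one_lt_card.1 hfree
      rw [mem_erase] at hc₁ hc₂
      exact Or.inl
        ⟨_, _, hp.update hc₁.2 hc₁.1, hp.update hc₂.2 hc₂.1, t + 1, le_rfl, by simpa⟩
    · have hmem : p t ∈ K (t + 1) := by
        by_contra hnot
        exact hfree (by rw [erase_eq_of_notMem hnot]; exact hK t (by omega))
      obtain ⟨c, hc⟩ : ∃ c, (K (t + 1)).erase (p t) = {c} := card_eq_one.1 (by
        have := pred_card_le_card_erase (s := K (t + 1)) (a := p t)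
        have := hK t (by omega)
        omega)
      have hc' : c ∈ (K (t + 1)).erase (p t) := hc ▸ mem_singleton_self c
      rw [mem_erase] at hc'
      refine Or.inr ⟨_, hp.update hc'.2 hc'.1, fun j hj => ?_⟩
      rcases lt_or_eq_of_le (Nat.lt_succ_iff.1 hj) with hj | rfl
      · rw [Function.update_of_ne (by omega), Function.update_of_ne (by omega)]
        exact hforced j hj
      · rw [Function.update_of_ne (by omega), Function.update_self, ← hc, insert_erase hmem]

lemma exists_isPathColoring {t : ℕ} (hK₀ : (K 0).Nonempty) (hK : ∀ j < t, 2 ≤ #(K (j + 1))) :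
    ∃ p, IsPathColoring K t p := by
  rcases exists_isPathColoring_ne_or_forced hK₀ t hK with ⟨p, -, hp, -⟩ | ⟨p, hp, -⟩ <;>
    exact ⟨p, hp⟩

end Path

section Cycle

variable {m : ℕ}

def IsCycleColoring (R : Fin (m + 1) → Finset ℕ) (g : Fin (m + 1) → ℕ) : Prop :=
  (∀ i, g i ∈ R i) ∧ ∀ i, g i ≠ g (i + 1)

def HasTwoCycleColorings (R : Fin (m + 1) → Finset ℕ) : Prop :=
  ∃ g₁ g₂, g₁ ≠ g₂ ∧ IsCycleColoring R g₁ ∧ IsCycleColoring R g₂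

lemma apply_eq_apply_zero_of_forall_apply_add_one {α : Type*} {F : Fin (m + 1) → α}
    (h : ∀ i, F i = F (i + 1)) (i : Fin (m + 1)) : F i = F 0 := by
  induction i using Fin.induction with
  | zero => rfl
  | succ i ih => rw [← Fin.coeSucc_eq_succ, ← h, ih]

variable {R : Fin (m + 1) → Finset ℕ}

lemma IsCycleColoring.mono {S : Fin (m + 1) → Finset ℕ} {g : Fin (m + 1) → ℕ}
    (hg : IsCycleColoring R g) (hRS : ∀ i, R i ⊆ S i) : IsCycleColoring S g :=
  ⟨fun i => hRS i (hg.1 i), hg.2⟩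

lemma IsCycleColoring.of_comp_add {g : Fin (m + 1) → ℕ} (c : Fin (m + 1))
    (hg : IsCycleColoring (fun i => R (i + c)) g) : IsCycleColoring R fun i => g (i - c) := by
  refine ⟨fun i => by simpa using hg.1 (i - c), fun i => ?_⟩
  show g (i - c) ≠ g (i + 1 - c)
  rw [show i + 1 - c = i - c + 1 by ring]
  exact hg.2 _

lemma IsCycleColoring.of_comp_sub {g : Fin (m + 1) → ℕ} (c : Fin (m + 1))
    (hg : IsCycleColoring (fun i => R (c - i)) g) : IsCycleColoring R fun i => g (c - i) := by
  refine ⟨fun i => by simpa using hg.1 (c - i), fun i => ?_⟩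
  have := hg.2 (c - (i + 1))
  rw [show c - (i + 1) + 1 = c - i by ring] at this
  exact this.symm

lemma HasTwoCycleColorings.of_comp_add (c : Fin (m + 1))
    (h : HasTwoCycleColorings fun i => R (i + c)) : HasTwoCycleColorings R := by
  obtain ⟨g₁, g₂, hne, hg₁, hg₂⟩ := h
  refine ⟨_, _, fun heq => hne (funext fun i => ?_), hg₁.of_comp_add c, hg₂.of_comp_add c⟩
  simpa using congrFun heq (i + c)

lemma HasTwoCycleColorings.of_comp_sub (c : Fin (m + 1))
    (h : HasTwoCycleColorings fun i => R (c - i)) : HasTwoCycleColorings R := by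
  obtain ⟨g₁, g₂, hne, hg₁, hg₂⟩ := h
  refine ⟨_, _, fun heq => hne (funext fun i => ?_), hg₁.of_comp_sub c, hg₂.of_comp_sub c⟩
  simpa using congrFun heq (c - i)

/-- Colourings of the cycle giving `0` the colour `x` are the colourings of the path
`0, 1, …, m` from these lists, the last vertex `m = -1` being also adjacent to `0`. -/
def pathLists (R : Fin (m + 1) → Finset ℕ) (x : ℕ) (j : ℕ) : Finset ℕ :=
  if j = 0 then {x} else if j = m then (R (-1)).erase x else R j

lemma isCycleColoring_of_isPathColoring {x : ℕ} {p : ℕ → ℕ} (hm : m ≠ 0) (hx : x ∈ R 0)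
    (hp : IsPathColoring (pathLists R x) m p) : IsCycleColoring R fun i => p i := by
  have hp₀ : p 0 = x := by simpa [pathLists] using hp.1 0 (Nat.zero_le m)
  have hlast : p m ∈ (R (-1)).erase x := by simpa [pathLists, hm] using hp.1 m le_rfl
  refine ⟨fun i => ?_, fun i => ?_⟩
  · have hi := hp.1 i (Nat.lt_succ_iff.1 i.isLt)
    unfold pathLists at hi
    split_ifs at hi with hi₀ him
    · obtain rfl : i = 0 := Fin.ext hi₀
      simpa [hp₀] using hx
    · obtain rfl : i = -1 := Fin.ext (by simpa using him)
      exact mem_of_mem_erase hi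
    · simpa using hi
  · rcases eq_or_ne i (Fin.last m) with rfl | hi
    · simpa [hp₀] using ne_of_mem_erase hlast
    · show p i ≠ p (i + 1 : Fin (m + 1))
      rw [Fin.val_add_one_of_lt (Fin.lt_last_iff_ne_last.2 hi)]
      exact hp.2 i (Fin.val_lt_last hi)

lemma two_le_card_pathLists {x : ℕ} (hR : ∀ i, i ≠ 0 → 2 ≤ #(R i))
    (hlast : 2 ≤ #((R (-1)).erase x)) : ∀ j < m, 2 ≤ #(pathLists R x (j + 1)) := by
  intro j hj
  rw [pathLists, if_neg j.succ_ne_zero]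
  split_ifs
  · exact hlast
  · refine hR _ fun h₀ => ?_
    have := congrArg Fin.val h₀
    rw [Fin.val_cast_of_lt (by omega)] at this
    simp at this

lemma exists_isCycleColoring_apply_zero {x : ℕ} (hm : m ≠ 0) (hx : x ∈ R 0)
    (hR : ∀ i, i ≠ 0 → 2 ≤ #(R i)) (hlast : 2 ≤ #((R (-1)).erase x)) :
    ∃ g, IsCycleColoring R g ∧ g 0 = x := by
  obtain ⟨p, hp⟩ := exists_isPathColoring (t := m) (K := pathLists R x) (by simp [pathLists])
    (two_le_card_pathLists hR hlast)
  exact ⟨_, isCycleColoring_of_isPathColoring hm hx hp, by simpa [pathLists] using hp.1 0⟩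

lemma HasTwoCycleColorings.of_three_le_card (hm : m ≠ 0) (hR : ∀ i, 2 ≤ #(R i))
    {i₀ : Fin (m + 1)} (h₃ : 3 ≤ #(R i₀)) : HasTwoCycleColorings R := by
  refine HasTwoCycleColorings.of_comp_add (i₀ + 1) ?_
  have hlast : ∀ x, 2 ≤ #((R (-1 + (i₀ + 1))).erase x) := fun x => by
    rw [show -1 + (i₀ + 1) = i₀ by ring]
    exact two_le_card_erase h₃ x
  have hcol : ∀ x ∈ R (0 + (i₀ + 1)),
      ∃ g, IsCycleColoring (fun i => R (i + (i₀ + 1))) g ∧ g 0 = x :=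
    fun x hx => exists_isCycleColoring_apply_zero hm hx (fun i _ => hR _) (hlast x)
  obtain ⟨x, hx, y, hy, hxy⟩ := one_lt_card.1 (hR (0 + (i₀ + 1)))
  obtain ⟨g₁, hg₁, rfl⟩ := hcol x hx
  obtain ⟨g₂, hg₂, rfl⟩ := hcol y hy
  exact ⟨g₁, g₂, fun h => hxy (congrFun h 0), hg₁, hg₂⟩

lemma HasTwoCycleColorings.or_forced {x : ℕ} (hR : ∀ i, 2 ≤ #(R i)) (hx : x ∈ R 0)
    (hx' : x ∉ R (-1)) :
    HasTwoCycleColorings R ∨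
      ∃ g, IsCycleColoring R g ∧ ∀ i, i ≠ 0 → i ≠ -1 → R i = {g (i - 1), g i} := by
  have hm : m ≠ 0 := by
    rintro rfl
    exact hx' (by rwa [Fin.eq_zero (-1)])
  rcases exists_isPathColoring_ne_or_forced (K := pathLists R x) (by simp [pathLists]) m
      (two_le_card_pathLists (fun i _ => hR i) (by rw [erase_eq_of_notMem hx']; exact hR _)) with
    ⟨p₁, p₂, hp₁, hp₂, j, hj, hne⟩ | ⟨p, hp, hforced⟩
  · refine Or.inl ⟨_, _, fun heq => hne ?_, isCycleColoring_of_isPathColoring hm hx hp₁,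
      isCycleColoring_of_isPathColoring hm hx hp₂⟩
    simpa [Fin.val_cast_of_lt (Nat.lt_succ_of_le hj)] using congrFun heq j
  · refine Or.inr ⟨_, isCycleColoring_of_isPathColoring hm hx hp, fun i hi₀ hi₁ => ?_⟩
    have hi₀' : (i : ℕ) ≠ 0 := Fin.val_ne_zero_iff.2 hi₀
    have hi₁' : (i : ℕ) ≠ m := fun h => hi₁ (Fin.ext (by rw [h, Fin.coe_neg_one]))
    have := hforced (i - 1) (by omega)
    rw [Nat.sub_add_cancel (Nat.pos_of_ne_zero hi₀')] at this
    simpa [pathLists, hi₀', hi₁', Fin.val_sub_one_of_ne_zero hi₀] using this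

end Cycle

section OddCycle

variable {k : ℕ} {R : Fin (2 * k + 1) → Finset ℕ}

lemma apply_zero_eq_apply_neg_one_of_forall {α : Type*} {g : Fin (2 * k + 1) → α}
    (h : ∀ i, i ≠ 0 → i ≠ -1 → g (i - 1) = g (i + 1)) : g 0 = g (-1) := by
  have hstep : ∀ e < k, g (2 * e : ℕ) = g (2 * (e + 1) : ℕ) := by
    intro e he
    have hv : ((2 * e + 1 : ℕ) : Fin (2 * k + 1)).val = 2 * e + 1 :=
      Fin.val_cast_of_lt (by omega)
    have := h (2 * e + 1 : ℕ) (Fin.ne_of_val_ne (by rw [hv]; simp))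
      (Fin.ne_of_val_ne (by rw [hv, Fin.coe_neg_one]; omega))
    convert this using 2 <;> push_cast <;> ring
  have hchain : ∀ e ≤ k, g 0 = g (2 * e : ℕ) := by
    intro e he
    induction e with
    | zero => simp
    | succ e ih => exact (ih (by omega)).trans (hstep e (by omega))
  rw [hchain k le_rfl]
  congr 1
  ext
  rw [Fin.val_cast_of_lt (by omega), Fin.coe_neg_one]

/-- If the colourings starting with `x` at `0` and with `y` at `-1` are unique and coincide, each
list `R i` is `{g (i - 1), g i} = {g (i + 1), g i}`, so `g` is 2-periodic from `0` to `-1`. -/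
lemma HasTwoCycleColorings.of_mem_of_not_mem {x y : ℕ} (hR : ∀ i, 2 ≤ #(R i)) (hx : x ∈ R 0)
    (hx' : x ∉ R (-1)) (hy : y ∈ R (-1)) (hy' : y ∉ R 0) : HasTwoCycleColorings R := by
  rcases HasTwoCycleColorings.or_forced hR hx hx' with H | ⟨g, hg, hfwd⟩
  · exact H
  rcases HasTwoCycleColorings.or_forced (R := fun i => R (-1 - i)) (fun i => hR _)
      (x := y) (by simpa using hy) (by simpa using hy') with H | ⟨g', hg', hbwd⟩
  · exact H.of_comp_sub (-1)
  by_cases hgg : g = fun i => g' (-1 - i)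
  swap
  · exact ⟨_, _, hgg, hg, hg'.of_comp_sub (-1)⟩
  refine (hg.2 (-1) ?_).elim
  rw [neg_add_cancel]
  refine (apply_zero_eq_apply_neg_one_of_forall fun i hi₀ hi₁ => ?_).symm
  have hRi : R i = {g (i + 1), g i} := by
    have := hbwd (-1 - i) (fun h => hi₁ (by linear_combination -h))
      (fun h => hi₀ (by linear_combination -h))
    rw [sub_sub_cancel] at this
    rw [this, hgg, show -1 - i - 1 = -1 - (i + 1) by ring]
  have hmem : g (i - 1) ∈ R i := by
    rw [hfwd i hi₀ hi₁]
    exact mem_insert_self _ _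
  rw [hRi, mem_insert, mem_singleton] at hmem
  refine hmem.resolve_right fun h => hg.2 (i - 1) ?_
  rwa [sub_add_cancel]

lemma eq_const_of_not_hasTwoCycleColorings (hk : 1 ≤ k) (hR : ∀ i, 2 ≤ #(R i))
    (hR₂ : ¬HasTwoCycleColorings R) : (∀ i, R i = R 0) ∧ #(R 0) ≤ 2 := by
  have hsmall : ∀ i, #(R i) ≤ 2 := fun i => by
    by_contra! h
    exact hR₂ (.of_three_le_card (by omega) hR h)
  refine ⟨apply_eq_apply_zero_of_forall_apply_add_one fun i => by_contra fun hne => ?_,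
    hsmall 0⟩
  obtain ⟨x, hx, hx'⟩ := not_subset.1 fun hsub =>
    hne (eq_of_subset_of_card_le hsub ((hsmall i).trans (hR _))).symm
  obtain ⟨y, hy, hy'⟩ := not_subset.1 fun hsub =>
    hne (eq_of_subset_of_card_le hsub ((hsmall _).trans (hR i)))
  have hprev : -1 + (i + 1) = i := by ring
  exact hR₂ <| .of_comp_add (i + 1) <| .of_mem_of_not_mem (fun _ => hR _)
    (by rwa [zero_add]) (by rwa [hprev]) (by rwa [hprev]) (by rwa [zero_add])

/-- Lists without two colourings would be `L i = S ∪ {f i}` for a single 2-set `S`, and this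
pins down `f` given `S`, or makes `f` constant. -/
lemma HasTwoCycleColorings.erase_or_erase (hk : 1 ≤ k) {L : Fin (2 * k + 1) → Finset ℕ}
    (hL : ∀ i, 3 ≤ #(L i)) {f f' : Fin (2 * k + 1) → ℕ} (hf : ∀ i, f i ≠ f (i + 1))
    (hne : f ≠ f') :
    (HasTwoCycleColorings fun i => (L i).erase (f i)) ∨
      HasTwoCycleColorings fun i => (L i).erase (f' i) := by
  have hbad : ∀ g : Fin (2 * k + 1) → ℕ, ¬(HasTwoCycleColorings fun i => (L i).erase (g i)) →
      (∀ i, g i ∈ L i ∧ (L i).erase (g i) = (L 0).erase (g 0)) ∧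
        #((L 0).erase (g 0)) ≤ 2 := by
    intro g hg
    obtain ⟨hconst, hcard⟩ :=
      eq_const_of_not_hasTwoCycleColorings hk (fun i => two_le_card_erase (hL i) (g i)) hg
    refine ⟨fun i => ⟨by_contra fun hgi => ?_, hconst i⟩, hcard⟩
    have := hL i
    rw [← erase_eq_of_notMem hgi, hconst i] at this
    omega
  by_contra! H
  obtain ⟨hf₁, hf₂⟩ := hbad f H.1
  obtain ⟨hf'₁, -⟩ := hbad f' H.2
  rcases eq_or_ne ((L 0).erase (f 0)) ((L 0).erase (f' 0)) with hS | hS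
  · refine hne (funext fun i => by_contra fun hi => ?_)
    have : f i ∈ (L i).erase (f' i) := mem_erase.2 ⟨hi, (hf₁ i).1⟩
    rw [(hf'₁ i).2, ← hS, ← (hf₁ i).2] at this
    exact notMem_erase _ _ this
  · obtain ⟨c, hc', hc⟩ := not_subset.1 fun hsub =>
      hS (eq_of_subset_of_card_le hsub (hf₂.trans (two_le_card_erase (hL 0) _))).symm
    have hfc : ∀ i, f i = c := fun i => by
      rw [← (hf'₁ i).2, mem_erase] at hc'
      rw [← (hf₁ i).2, mem_erase] at hc
      by_contra h
      exact hc ⟨Ne.symm h, hc'.2⟩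
    exact hf 0 ((hfc 0).trans (hfc (0 + 1)).symm)

lemma exists_column_colorings (hk : 1 ≤ k) :
    ∀ (t : ℕ) (L : ℕ → Fin (2 * k + 1) → Finset ℕ), HasTwoCycleColorings (L 0) →
      (∀ j < t, ∀ i, 3 ≤ #(L (j + 1) i)) →
      ∃ c : ℕ → Fin (2 * k + 1) → ℕ,
        (∀ j ≤ t, IsCycleColoring (L j) (c j)) ∧ ∀ j < t, ∀ i, c j i ≠ c (j + 1) i
  | 0, L, h₀, _ => by
    obtain ⟨g, -, -, hg, -⟩ := h₀
    refine ⟨fun _ => g, fun j hj => ?_, by simp⟩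
    obtain rfl : j = 0 := by omega
    exact hg
  | t + 1, L, h₀, hL => by
    obtain ⟨f, f', hne, hf, hf'⟩ := h₀
    obtain ⟨b, hb, hnext⟩ : ∃ b, IsCycleColoring (L 0) b ∧
        HasTwoCycleColorings fun i => (L 1 i).erase (b i) := by
      rcases HasTwoCycleColorings.erase_or_erase hk (hL 0 (by omega)) hf.2 hne with H | H
      exacts [⟨f, hf, H⟩, ⟨f', hf', H⟩]
    obtain ⟨c, hc, hrow⟩ := exists_column_colorings hk t
      (fun j => if j = 0 then fun i => (L 1 i).erase (b i) else L (j + 1))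
      (by simpa using hnext) (fun j hj => by simpa using hL (j + 1) (by omega))
    refine ⟨fun j => if j = 0 then b else c (j - 1), fun j hj => ?_, fun j hj i => ?_⟩
    · rcases j with _ | j
      · simpa using hb
      · have := hc j (by omega)
        simp only [Nat.add_one_ne_zero, if_false, Nat.add_sub_cancel]
        split_ifs at this with hj₀
        · subst hj₀
          exact this.mono fun i => erase_subset _ _
        · exact this
    · rcases j with _ | j
      · have := (hc 0 (by omega)).1 i
        simp only [if_true] at this ⊢
        exact (ne_of_mem_erase this).symm
      · simpa using hrow j (by omega) i

end OddCycle

section Cylinder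

variable {m : ℕ}

lemma eq_add_one_or_eq_add_one_of_cycleGraph_adj {u v : Fin (m + 1)}
    (h : (cycleGraph (m + 1)).Adj u v) : v = u + 1 ∨ u = v + 1 := by
  rcases m with _ | m
  · simp [cycleGraph_one_adj] at h
  · rcases cycleGraph_adj.1 h with h | h
    · exact Or.inr (by linear_combination h)
    · exact Or.inl (by linear_combination h)

lemma choosable_boxProd_pathGraph_of_columns {n : ℕ} (L : Fin (m + 1) × Fin n → Finset ℕ)
    (c : ℕ → Fin (m + 1) → ℕ)
    (hcol : ∀ j : Fin n, IsCycleColoring (fun i => L (i, j)) (c j))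
    (hrow : ∀ j, j + 1 < n → ∀ i, c j i ≠ c (j + 1) i) :
    Choosable (cycleGraph (m + 1) □ pathGraph n) L := by
  refine ⟨fun p => c p.2 p.1, fun p => (hcol p.2).1 p.1, ?_⟩
  rintro ⟨i, j⟩ ⟨i', j'⟩ hadj
  rcases boxProd_adj.1 hadj with ⟨hc, rfl : j = j'⟩ | ⟨hp, rfl : i = i'⟩
  · rcases eq_add_one_or_eq_add_one_of_cycleGraph_adj hc with rfl | rfl
    · exact (hcol j).2 i
    · exact ((hcol j).2 i').symm
  · show c j i ≠ c j' i
    rcases pathGraph_adj.1 hp with h | h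
    · rw [← h]
      exact hrow j (h ▸ j'.isLt) i
    · rw [← h]
      exact (hrow j' (h ▸ j.isLt) i).symm

end Cylinder

/-- If `L` gives at least `3` colors to `(v₁, w₁)`, at least `2` colors to every other
vertex of the first copy of the cycle, and at least `3` colors to all remaining
vertices, then `C_{2k+1} □ P_n` is `L`-colorable. -/
theorem choosable_oddCycle_boxProd_path_special_lists (k n : ℕ) (hk : 1 ≤ k) (hn : 2 ≤ n)
    (L : Fin (2 * k + 1) × Fin n → Finset ℕ)
    (h1 : 3 ≤ (L (⟨0, by omega⟩, ⟨0, by omega⟩)).card)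
    (h2 : ∀ i : Fin (2 * k + 1), i.val ≠ 0 → 2 ≤ (L (i, ⟨0, by omega⟩)).card)
    (h3 : ∀ (i : Fin (2 * k + 1)) (j : Fin n), j.val ≠ 0 → 3 ≤ (L (i, j)).card) :
    Choosable (cycleGraph (2 * k + 1) □ pathGraph n) L := by
  let col : ℕ → Fin (2 * k + 1) → Finset ℕ :=
    fun j i => if h : j < n then L (i, ⟨j, h⟩) else ∅
  have hcol : ∀ (j : Fin n) i, col j i = L (i, j) := fun j i => dif_pos j.isLt
  have hcol₀ : ∀ i, col 0 i = L (i, ⟨0, by omega⟩) := fun i => dif_pos (by omega)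
  have hfirst : HasTwoCycleColorings (col 0) := by
    refine .of_three_le_card (i₀ := 0) (by omega) (fun i => ?_) (by rw [hcol₀]; exact h1)
    rw [hcol₀]
    rcases eq_or_ne i 0 with rfl | hi
    · exact h1.trans' (by omega)
    · exact h2 i (Fin.val_ne_zero_iff.2 hi)
  have hrest : ∀ j < n - 1, ∀ i, 3 ≤ #(col (j + 1) i) := fun j hj i => by
    simpa [col, show j + 1 < n by omega] using h3 i ⟨j + 1, by omega⟩ j.succ_ne_zero
  obtain ⟨c, hc, hrow⟩ := exists_column_colorings hk (n - 1) col hfirst hrest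
  refine choosable_boxProd_pathGraph_of_columns L c (fun j => ?_) fun j hj => hrow j (by omega)
  simpa [funext (hcol j)] using hc j (by omega)

end ATPaper
end

section
/- Fix integers k ≥ 1 and n ≥ 2. The number of sequences (a_0, a_1, …, a_{n−2}) with each a_i ∈ {0, 1, …, 2k}, satisfying a_0 ≠ 0, a_i ≠ a_{i+1} for each 0 ≤ i ≤ n−3, and a_{n−2} ≠ 1, is odd. -/
open SimpleGraph Finset

attribute [local instance] Classical.propDecidable

namespace ATPaper

variable {V : Type*} [Fintype V]

/-!
Sequences with consecutive entries distinct are walks in the complete graph on `q` vertices.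
Let `w_m(c)` count the walks of length `m` from `c` that do not end at `b`. Deleting the first
vertex gives `w_{m+1}(c) = ∑_{c' ≠ c} w_m(c')`. When `q` is odd, the indicator of `c ≠ b` has
even total `q - 1`, so it is a fixed point of this recursion mod 2; hence `w_m(c)` is odd
exactly when `c ≠ b`. Prepending the entry `0` identifies the sequences of the theorem with the
walks of length `n - 1` from `0` not ending at `1`, and `0 ≠ 1`.
-/

section CompleteGraphWalks

variable {α : Type*}

def ConsecutiveNe {m : ℕ} (a : Fin (m + 1) → α) : Prop :=
  ∀ i : Fin m, a i.castSucc ≠ a i.succ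

lemma consecutiveNe_cons {m : ℕ} (c : α) (a : Fin (m + 1) → α) :
    ConsecutiveNe (Fin.cons c a : Fin (m + 2) → α) ↔ c ≠ a 0 ∧ ConsecutiveNe a := by
  simp only [ConsecutiveNe, Fin.forall_fin_succ, Fin.castSucc_zero, Fin.cons_zero,
    ← Fin.succ_castSucc, Fin.cons_succ]

variable [Fintype α]

noncomputable def walksNotEndingAt (b : α) (m : ℕ) : Finset (Fin (m + 1) → α) :=
  {a | ConsecutiveNe a ∧ a (Fin.last m) ≠ b}

lemma mem_walksNotEndingAt {b : α} {m : ℕ} {a : Fin (m + 1) → α} :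
    a ∈ walksNotEndingAt b m ↔ ConsecutiveNe a ∧ a (Fin.last m) ≠ b := by
  simp [walksNotEndingAt]

lemma cons_mem_walksNotEndingAt {b : α} {m : ℕ} (c : α) (a : Fin (m + 1) → α) :
    (Fin.cons c a : Fin (m + 2) → α) ∈ walksNotEndingAt b (m + 1) ↔
      c ≠ a 0 ∧ a ∈ walksNotEndingAt b m := by
  simp [mem_walksNotEndingAt, consecutiveNe_cons, ← Fin.succ_last, and_assoc]

variable [DecidableEq α]

lemma card_walksNotEndingAt_zero_from (b c : α) :
    #{a ∈ walksNotEndingAt b 0 | a 0 = c} = if c = b then 0 else 1 := by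
  split_ifs with hcb
  · subst hcb
    simp [mem_walksNotEndingAt, Fin.last]
  · rw [card_eq_one]
    refine ⟨fun _ => c, ?_⟩
    ext a
    simp [mem_walksNotEndingAt, Fin.last, ConsecutiveNe, funext_iff, Fin.forall_fin_one]
    rintro rfl
    exact hcb

lemma card_walksNotEndingAt_succ_from (b c : α) (m : ℕ) :
    #{a ∈ walksNotEndingAt b (m + 1) | a 0 = c} = #{a ∈ walksNotEndingAt b m | a 0 ≠ c} := by
  refine card_nbij' Fin.tail (fun a => (Fin.cons c a : Fin (m + 2) → α)) ?_ ?_ ?_ ?_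
  · intro a ha
    obtain ⟨hmem, rfl⟩ := mem_filter.1 ha
    rw [← Fin.cons_self_tail a, cons_mem_walksNotEndingAt] at hmem
    exact mem_filter.2 ⟨hmem.2, hmem.1.symm⟩
  · intro a ha
    obtain ⟨hmem, hc⟩ := mem_filter.1 ha
    exact mem_filter.2 ⟨(cons_mem_walksNotEndingAt c a).2 ⟨Ne.symm hc, hmem⟩, Fin.cons_zero _ _⟩
  · intro a ha
    rw [← (mem_filter.1 ha).2]
    exact Fin.cons_self_tail a
  · intro a _
    exact Fin.tail_cons _ _

lemma card_walksNotEndingAt_from_mod_two (hα : Odd (Fintype.card α)) (b c : α) (m : ℕ) :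
    (#{a ∈ walksNotEndingAt b m | a 0 = c} : ZMod 2) = if c = b then 0 else 1 := by
  induction m generalizing c with
  | zero => rw [card_walksNotEndingAt_zero_from]; split_ifs <;> simp
  | succ m ih =>
    have hsplit := card_filter_add_card_filter_not (s := walksNotEndingAt b m) (· 0 = c)
    have hfibers := card_eq_sum_card_fiberwise (f := (· 0)) (s := walksNotEndingAt b m)
      (t := univ) (fun _ _ => mem_coe.2 (mem_univ _))
    have hsum : ∑ c' : α, (if c' = b then 0 else 1 : ZMod 2) = 0 := by
      rw [sum_ite, sum_const_zero, zero_add, sum_const, nsmul_one, filter_ne',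
        card_erase_of_mem (mem_univ b), card_univ, ZMod.natCast_eq_zero_iff_even]
      exact hα.tsub_odd odd_one
    have hcast := congrArg (Nat.cast : ℕ → ZMod 2) hsplit
    push_cast [hfibers, ih, hsum] at hcast
    rw [card_walksNotEndingAt_succ_from, ← ZMod.neg_eq_self_mod_two (if c = b then _ else _)]
    exact eq_neg_of_add_eq_zero_right hcast

end CompleteGraphWalks

/-- For `k ≥ 1` and `n ≥ 2`, the number of sequences `(a₀, …, a_{n-2})` with entries in
`{0, 1, …, 2k}` such that `a₀ ≠ 0`, consecutive entries differ, and `a_{n-2} ≠ 1`,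
is odd. -/
theorem odd_card_levelSubsequences (k n : ℕ) (hk : 1 ≤ k) (hn : 2 ≤ n) :
    Odd (Finset.univ.filter fun a : Fin (n - 1) → Fin (2 * k + 1) =>
      (a ⟨0, by omega⟩).val ≠ 0 ∧
      (∀ i : ℕ, (h : i + 1 < n - 1) → a ⟨i, by omega⟩ ≠ a ⟨i + 1, h⟩) ∧
      (a ⟨n - 2, by omega⟩).val ≠ 1).card := by
  obtain ⟨m, rfl⟩ : ∃ m, n = m + 2 := ⟨n - 2, by omega⟩
  let one : Fin (2 * k + 1) := ⟨1, by omega⟩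
  have hwalks : Odd #{a ∈ walksNotEndingAt one m | a 0 ≠ 0} := by
    rw [← card_walksNotEndingAt_succ_from, ← ZMod.natCast_eq_one_iff_odd,
      card_walksNotEndingAt_from_mod_two (by simp), if_neg (by simp [one, Fin.ext_iff])]
  convert hwalks using 2
  · rfl -- `m + 2 - 1` reduces to `m + 1`
  ext a
  simp only [mem_filter, mem_univ, true_and, mem_walksNotEndingAt, ConsecutiveNe]
  constructor
  · rintro ⟨h0, hchain, h1⟩
    exact ⟨⟨fun i => hchain i (by omega), fun h => h1 (congrArg Fin.val h)⟩,
      fun h => h0 (congrArg Fin.val h)⟩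
  · rintro ⟨⟨hchain, h1⟩, h0⟩
    exact ⟨fun h => h0 (Fin.ext h), fun i _ => hchain ⟨i, by omega⟩, fun h => h1 (Fin.ext h)⟩

end ATPaper
end

section
/- The list chromatic number of C_6^2 □ P_2 is strictly greater than 3, where C_6^2 is the square of the cycle on 6 vertices; consequently C_6^2 □ P_2 is not chromatic-choosable even though χ(C_6^2) = 3 and C_6^2 is chromatic-choosable. -/
open SimpleGraph Finset

attribute [local instance] Classical.propDecidable

namespace ATPaper

variable {V : Type*} [Fintype V]

/-!
`C₆²` is the octahedron `K₂,₂,₂`: `i` and `j` are adjacent unless `j = i` or `j = i + 3`. A graph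
on `2k` vertices whose non-edges contain a perfect matching is `k`-choosable: if two partners
share a color, both get it and we recurse on the rest with that color deleted; otherwise every
set of vertices either contains a pair of partners, whose lists are disjoint, or has at most `k`
elements, so Hall's theorem gives pairwise distinct colors. With the triangle `0, 1, 2` this gives
`χ(C₆²) = χ_ℓ(C₆²) = 3`, and `C₆² □ P₂` is still 3-colorable by adding colorings of the factors.
Its list chromatic number exceeds 3 because of the explicit lists `badLists`, which are checked
by an exhaustive search.
-/
section ListColoring

variable {W : Type*}

theorem IsKChoosable.mono {G : SimpleGraph W} {k m : ℕ} (hk : IsKChoosable G k) (h : k ≤ m) :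
    IsKChoosable G m :=
  fun L hL => hk L fun v => h.trans (hL v)

def ChoosableOn (G : SimpleGraph W) (L : W → Finset ℕ) (s : Finset W) : Prop :=
  ∃ f : W → ℕ, (∀ v ∈ s, f v ∈ L v) ∧ ∀ u ∈ s, ∀ v ∈ s, G.Adj u v → f u ≠ f v

theorem choosable_iff_choosableOn_univ [Fintype W] {G : SimpleGraph W} {L : W → Finset ℕ} :
    Choosable G L ↔ ChoosableOn G L univ := by
  simp [Choosable, ChoosableOn]

theorem choosableOn_of_forall_card_le_card_biUnion {G : SimpleGraph W} {L : W → Finset ℕ}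
    {s : Finset W} (h : ∀ S ⊆ s, #S ≤ #(S.biUnion L)) : ChoosableOn G L s := by
  obtain ⟨f, hinj, hf⟩ :=
    (all_card_le_biUnion_card_iff_exists_injective fun v : s => L v).1 fun S => by
      rw [← card_image_of_injective S Subtype.val_injective, ← image_biUnion]
      exact h _ fun x hx => by
        obtain ⟨y, -, rfl⟩ := mem_image.1 hx
        exact y.2
  refine ⟨fun v => if hv : v ∈ s then f ⟨v, hv⟩ else 0,
    fun v hv => by simpa [hv] using hf ⟨v, hv⟩, fun u hu v hv huv heq => G.ne_of_adj huv ?_⟩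
  simp only [hu, hv, dite_true] at heq
  exact congrArg Subtype.val (hinj heq)

theorem isKChoosable_card [Fintype W] (G : SimpleGraph W) : IsKChoosable G (Fintype.card W) := by
  refine fun L hL => choosable_iff_choosableOn_univ.2 <|
    choosableOn_of_forall_card_le_card_biUnion fun S _ => ?_
  obtain rfl | ⟨v, hv⟩ := S.eq_empty_or_nonempty
  · simp
  · exact (S.card_le_univ.trans (hL v)).trans (card_le_card (subset_biUnion_of_mem L hv))

theorem isKChoosable_listChromaticNumber [Finite W] (G : SimpleGraph W) :
    IsKChoosable G (listChromaticNumber G) := by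
  have := Fintype.ofFinite W
  exact Nat.sInf_mem (s := {k | IsKChoosable G k}) ⟨_, isKChoosable_card G⟩

theorem listChromaticNumber_le {G : SimpleGraph W} {k : ℕ} (h : IsKChoosable G k) :
    listChromaticNumber G ≤ k :=
  Nat.sInf_le h

theorem lt_listChromaticNumber_of_not_choosable [Finite W] {G : SimpleGraph W} {k : ℕ}
    {L : W → Finset ℕ} (hL : ∀ v, k ≤ #(L v)) (h : ¬ Choosable G L) :
    k < listChromaticNumber G := by
  by_contra! hle
  exact h ((isKChoosable_listChromaticNumber G).mono hle L hL)

theorem chromaticNumber_le_listChromaticNumber [Finite W] (G : SimpleGraph W) :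
    G.chromaticNumber ≤ listChromaticNumber G := by
  obtain ⟨f, hf, hproper⟩ := isKChoosable_listChromaticNumber G
    (fun _ => range (listChromaticNumber G)) (by simp)
  refine Colorable.chromaticNumber_le ⟨Coloring.mk (fun v => ⟨f v, by simpa using hf v⟩) ?_⟩
  exact fun {u v} huv heq => hproper u v huv (congrArg Fin.val heq)

theorem ChoosableOn.of_sdiff_of_isIndepSet {G : SimpleGraph W} {L : W → Finset ℕ}
    {s I : Finset W} {c : ℕ} (hI : G.IsIndepSet I) (hc : ∀ v ∈ I, c ∈ L v)
    (h : ChoosableOn G (fun v => (L v).erase c) (s \ I)) : ChoosableOn G L s := by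
  obtain ⟨f, hf, hproper⟩ := h
  have hf_ne : ∀ v ∈ s, v ∉ I → f v ≠ c := fun v hv hvI =>
    ne_of_mem_erase (hf v (mem_sdiff.2 ⟨hv, hvI⟩))
  refine ⟨fun v => if v ∈ I then c else f v, fun v hv => ?_, fun u hu v hv huv => ?_⟩
  · by_cases hvI : v ∈ I
    · simpa [hvI] using hc v hvI
    · simpa [hvI] using mem_of_mem_erase (hf v (mem_sdiff.2 ⟨hv, hvI⟩))
  · by_cases huI : u ∈ I <;> by_cases hvI : v ∈ I <;> simp only [huI, hvI, if_true, if_false]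
    · exact absurd huv (hI huI hvI (G.ne_of_adj huv))
    · exact (hf_ne v hv hvI).symm
    · exact hf_ne u hu huI
    · exact hproper u (mem_sdiff.2 ⟨hu, huI⟩) v (mem_sdiff.2 ⟨hv, hvI⟩) huv

end ListColoring

section Involution

variable {W : Type*} {G : SimpleGraph W} {σ : W → W}

theorem choosableOn_of_disjoint_involution (hσ : Function.Involutive σ) {L : W → Finset ℕ}
    {s : Finset W} (hs : ∀ v ∈ s, σ v ∈ s) (hL : ∀ v ∈ s, #s ≤ 2 * #(L v))
    (hdisj : ∀ v ∈ s, Disjoint (L v) (L (σ v))) : ChoosableOn G L s := by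
  refine choosableOn_of_forall_card_le_card_biUnion fun S hS => ?_
  by_cases hpair : ∃ v ∈ S, σ v ∈ S
  · obtain ⟨v, hv, hσv⟩ := hpair
    have := hL v (hS hv)
    have := hL (σ v) (hS hσv)
    calc #S ≤ #s := card_le_card hS
      _ ≤ #(L v) + #(L (σ v)) := by omega
      _ = #(L v ∪ L (σ v)) := (card_union_of_disjoint (hdisj v (hS hv))).symm
      _ ≤ #(S.biUnion L) := card_le_card <|
        union_subset (subset_biUnion_of_mem L hv) (subset_biUnion_of_mem L hσv)
  · push Not at hpair
    obtain rfl | ⟨v, hv⟩ := S.eq_empty_or_nonempty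
    · simp
    have hS_image : Disjoint S (S.image σ) := disjoint_left.2 fun w hw hw' => by
      obtain ⟨x, hx, rfl⟩ := mem_image.1 hw'
      exact hpair x hx hw
    have hcard : #S + #(S.image σ) ≤ #s := by
      rw [← card_union_of_disjoint hS_image]
      exact card_le_card (union_subset hS fun w hw => by
        obtain ⟨x, hx, rfl⟩ := mem_image.1 hw
        exact hs x (hS hx))
    rw [card_image_of_injective S hσ.injective] at hcard
    have := hL v (hS hv)
    calc #S ≤ #(L v) := by omega
      _ ≤ #(S.biUnion L) := card_le_card (subset_biUnion_of_mem L hv)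

theorem choosableOn_of_adj_ne_involution (hσ : Function.Involutive σ) (hfix : ∀ v, σ v ≠ v)
    (hG : ∀ u v, G.Adj u v → v ≠ σ u) (s : Finset W) (hs : ∀ v ∈ s, σ v ∈ s)
    (L : W → Finset ℕ) (hL : ∀ v ∈ s, #s ≤ 2 * #(L v)) : ChoosableOn G L s := by
  induction s using Finset.strongInduction generalizing L with
  | H s ih =>
  by_cases hshare : ∃ u ∈ s, ∃ c, c ∈ L u ∧ c ∈ L (σ u)
  · obtain ⟨u, hu, c, hcu, hcσu⟩ := hshare
    have hIs : {u, σ u} ⊆ s := insert_subset hu (singleton_subset_iff.2 (hs u hu))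
    have hI : G.IsIndepSet ({u, σ u} : Finset W) := by
      intro x hx y hy hxy hadj
      simp only [coe_insert, coe_singleton, Set.mem_insert_iff, Set.mem_singleton_iff] at hx hy
      rcases hx with rfl | rfl <;> rcases hy with rfl | rfl
      · exact hxy rfl
      · exact hG _ _ hadj rfl
      · exact hG _ _ hadj (hσ _).symm
      · exact hxy rfl
    have hcard : #(s \ {u, σ u}) + 2 = #s := by
      have := card_le_card hIs
      rw [card_pair (hfix u).symm] at this
      rw [card_sdiff_of_subset hIs, card_pair (hfix u).symm]
      omega
    refine ChoosableOn.of_sdiff_of_isIndepSet (c := c) hI ?_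
      (ih _ (sdiff_ssubset hIs (insert_nonempty _ _)) ?_ _ ?_)
    · simp [hcu, hcσu]
    · intro v hv
      simp only [mem_sdiff, mem_insert, mem_singleton, not_or] at hv ⊢
      refine ⟨hs v hv.1, fun h => hv.2.2 ?_, fun h => hv.2.1 (hσ.injective h)⟩
      rw [← h, hσ v]
    · intro v hv
      have := hL v (mem_sdiff.1 hv).1
      have := pred_card_le_card_erase (s := L v) (a := c)
      omega
  · push Not at hshare
    exact choosableOn_of_disjoint_involution hσ hs hL
      fun v hv => disjoint_left.2 fun c hc hc' => hshare v hv c hc hc'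

theorem isKChoosable_of_adj_ne_involution [Fintype W] (hσ : Function.Involutive σ)
    (hfix : ∀ v, σ v ≠ v) (hG : ∀ u v, G.Adj u v → v ≠ σ u) {k : ℕ}
    (hk : Fintype.card W ≤ 2 * k) : IsKChoosable G k :=
  fun L hL => choosable_iff_choosableOn_univ.2 <|
    choosableOn_of_adj_ne_involution hσ hfix hG univ (by simp) L fun v _ => hk.trans (by
      have := hL v; omega)

end Involution

section GraphPower

variable {W : Type*} {G : SimpleGraph W} {u v : W}

theorem graphPower_adj_iff {r : ℕ} :
    (graphPower G r).Adj u v ↔ u ≠ v ∧ ∃ p : G.Walk u v, p.length ≤ r := by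
  refine ⟨fun ⟨hne, hreach, hdist⟩ => ?_,
    fun ⟨hne, p, hp⟩ => ⟨hne, p.reachable, (dist_le p).trans hp⟩⟩
  obtain ⟨p, hp⟩ := hreach.exists_walk_length_eq_dist
  exact ⟨hne, p, hp ▸ hdist⟩

theorem graphPower_two_adj_iff :
    (graphPower G 2).Adj u v ↔ u ≠ v ∧ (G.Adj u v ∨ ∃ w, G.Adj u w ∧ G.Adj w v) := by
  refine graphPower_adj_iff.trans (and_congr_right fun hne => ⟨?_, ?_⟩)
  · rintro ⟨p, hp⟩
    match p, hp with
    | .nil, _ => exact absurd rfl hne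
    | .cons h .nil, _ => exact .inl h
    | .cons h (.cons h' .nil), _ => exact .inr ⟨_, h, h'⟩
    | .cons _ (.cons _ (.cons _ _)), hp => simp at hp
  · rintro (h | ⟨w, h, h'⟩)
    · exact ⟨h.toWalk, by simp⟩
    · exact ⟨.cons h h'.toWalk, by simp⟩

end GraphPower

theorem _root_.SimpleGraph.Colorable.boxProd {U W : Type*} {G : SimpleGraph U}
    {H : SimpleGraph W} {n : ℕ} (hG : G.Colorable n) (hH : H.Colorable n) :
    (G □ H).Colorable n := by
  obtain ⟨c⟩ := hG
  obtain ⟨d⟩ := hH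
  rcases n with _ | n
  · exact ⟨Coloring.mk (fun p => (c p.1).elim0) fun {p} => (c p.1).elim0⟩
  · refine ⟨Coloring.mk (fun p => c p.1 + d p.2) ?_⟩
    rintro ⟨u, w⟩ ⟨u', w'⟩ (⟨hu, rfl⟩ | ⟨hw, rfl⟩) heq
    · exact c.valid hu (add_right_cancel heq)
    · exact d.valid hw (add_left_cancel heq)

theorem graphPower_cycleGraph_six_two_adj {i j : Fin 6} :
    (graphPower (cycleGraph 6) 2).Adj i j ↔ i ≠ j ∧ j ≠ i + 3 := by
  rw [graphPower_two_adj_iff]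
  revert i j
  decide

theorem isKChoosable_graphPower_cycleGraph_six_two :
    IsKChoosable (graphPower (cycleGraph 6) 2) 3 :=
  isKChoosable_of_adj_ne_involution (σ := (· + 3)) (fun i => by decide +revert) (by decide)
    (fun _ _ h => (graphPower_cycleGraph_six_two_adj.1 h).2) (by simp)

theorem colorable_graphPower_cycleGraph_six_two : (graphPower (cycleGraph 6) 2).Colorable 3 := by
  refine ⟨Coloring.mk (fun i => ⟨i.val % 3, Nat.mod_lt _ (by norm_num)⟩) fun {i j} h => ?_⟩
  rw [graphPower_cycleGraph_six_two_adj] at h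
  revert i j
  decide

theorem chromaticNumber_graphPower_cycleGraph_six_two :
    (graphPower (cycleGraph 6) 2).chromaticNumber = 3 := by
  refine le_antisymm colorable_graphPower_cycleGraph_six_two.chromaticNumber_le ?_
  refine le_chromaticNumber_of_pairwise_adj (ι := Fin 3) (by simp) (Fin.castLE (by norm_num))
    fun i j hij => graphPower_cycleGraph_six_two_adj.2 ?_
  revert i j
  decide

section Search

variable {W : Type*}

def listColoringSearch (adj : W → W → Bool) (L : W → List ℕ) :
    List W → List (W × ℕ) → Bool
  | [], _ => true
  | v :: vs, acc => (L v).any fun c =>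
      acc.all (fun p => !adj v p.1 || c != p.2) && listColoringSearch adj L vs ((v, c) :: acc)

theorem listColoringSearch_eq_true {G : SimpleGraph W} {adj : W → W → Bool}
    (hadj : ∀ u v, adj u v = true → G.Adj u v) {L : W → List ℕ} {f : W → ℕ}
    (hf : ∀ v, f v ∈ L v) (hproper : ∀ u v, G.Adj u v → f u ≠ f v) :
    ∀ (vs : List W) (acc : List (W × ℕ)), (∀ p ∈ acc, f p.1 = p.2) →
      listColoringSearch adj L vs acc = true
  | [], _, _ => rfl
  | v :: vs, acc, hacc => by
    simp only [listColoringSearch, List.any_eq_true, Bool.and_eq_true, List.all_eq_true]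
    refine ⟨f v, hf v, fun p hp => ?_, listColoringSearch_eq_true hadj hf hproper vs _ ?_⟩
    · cases h : adj v p.1
      · simp
      · simp [← hacc p hp, hproper v p.1 (hadj v p.1 h)]
    · intro p hp
      rcases List.mem_cons.1 hp with rfl | hp
      exacts [rfl, hacc p hp]

theorem not_choosable_of_listColoringSearch_eq_false {G : SimpleGraph W} {adj : W → W → Bool}
    (hadj : ∀ u v, adj u v = true → G.Adj u v) {L : W → List ℕ} {vs : List W}
    (h : listColoringSearch adj L vs [] = false) : ¬ Choosable G fun v => (L v).toFinset := by
  rintro ⟨f, hf, hproper⟩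
  have := listColoringSearch_eq_true hadj (fun v => List.mem_toFinset.1 (hf v)) hproper vs []
    (by simp)
  simp_all

end Search

/-- Apart from the common color `1`, the antipodal columns `i` and `i + 3` carry the two blocks
of a partition of `{2, 3, 4, 5}` into pairs, a different partition for each of the three
antipodal pairs. In a coloring, each layer would use `1` on exactly one antipodal pair and
`2, 3, 4, 5` once each on the other four vertices; comparing the two layers then yields a fourth
partition of `{2, 3, 4, 5}` into pairs, which does not exist. -/
def badLists (v : Fin 6 × Fin 2) : List ℕ :=
  ![[1, 3, 4], [1, 2, 3], [1, 3, 5], [1, 2, 5], [1, 4, 5], [1, 2, 4]] v.1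

theorem not_choosable_badLists :
    ¬ Choosable (graphPower (cycleGraph 6) 2 □ pathGraph 2) fun v => (badLists v).toFinset := by
  refine not_choosable_of_listColoringSearch_eq_false
    (adj := fun a b => decide (a.2 = b.2 ∧ a.1 ≠ b.1 ∧ b.1 ≠ a.1 + 3 ∨ a.1 = b.1 ∧ a.2 ≠ b.2))
    (vs := List.finRange 6 ×ˢ List.finRange 2) (fun a b h => ?_) rfl
  rw [boxProd_adj, graphPower_cycleGraph_six_two_adj, pathGraph_two_eq_top, top_adj]
  simp only [decide_eq_true_eq] at h
  tauto

/-- `χ_ℓ(C₆² □ P₂) > 3`; consequently `C₆² □ P₂` is not chromatic-choosable, even though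
`χ(C₆²) = 3` and `C₆²` is chromatic-choosable. -/
theorem three_lt_listChromaticNumber_pow_cycle_six_boxProd_path :
    3 < listChromaticNumber (graphPower (cycleGraph 6) 2 □ pathGraph 2) ∧
    (graphPower (cycleGraph 6) 2 □ pathGraph 2).chromaticNumber ≠
      (listChromaticNumber (graphPower (cycleGraph 6) 2 □ pathGraph 2) : ℕ∞) ∧
    (graphPower (cycleGraph 6) 2).chromaticNumber = 3 ∧
    (graphPower (cycleGraph 6) 2).chromaticNumber =
      (listChromaticNumber (graphPower (cycleGraph 6) 2) : ℕ∞) := by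
  have hlist : 3 < listChromaticNumber (graphPower (cycleGraph 6) 2 □ pathGraph 2) :=
    lt_listChromaticNumber_of_not_choosable (fun v => by fin_cases v <;> rfl)
      not_choosable_badLists
  have hcol : (graphPower (cycleGraph 6) 2 □ pathGraph 2).Colorable 3 :=
    colorable_graphPower_cycleGraph_six_two.boxProd
      ((pathGraph.bicoloring 2).colorable.mono (by simp))
  have hχ := chromaticNumber_graphPower_cycleGraph_six_two
  refine ⟨hlist, fun h => ?_, hχ, le_antisymm (chromaticNumber_le_listChromaticNumber _) ?_⟩
  · have := h ▸ hcol.chromaticNumber_le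
    norm_cast at this
    omega
  · rw [hχ]
    exact_mod_cast listChromaticNumber_le isKChoosable_graphPower_cycleGraph_six_two

end ATPaper
end
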